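/- Let R be an associative unital ℂ-algebra with a derivation D (write r' := D r), let x ∈ R be central with x' = 1, and let f, g, a ∈ R with a' = 0. Define the 2×2 matrices over the Laurent polynomial ring R[μ, μ⁻¹]: A(μ) = [[0,2],[0,0]]μ + [[−2f, 2f²−g+x],[−2, 2f]] + [[0,0],[−g, −(fg−gf)−a]]μ⁻¹ and B(μ) = [[0,1],[0,0]]μ + [[−f, 0],[−1, f]]. Then the zero-curvature equation ∂ₓA − ∂_μB + AB − BA = 0 holds identically in μ if and only if f' = −f² + g − (1/2)x and g' = 2fg + a. (The Harnad–Tracy–Widom pair HTW₂¹ is an isomonodromic Lax pair exactly for the non-abelian system P₂¹.) -/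
import Mathlib


/- STATEMENT 11: The Harnad–Tracy–Widom pair HTW₂¹ is an isomonodromic Lax pair
exactly for the non-abelian system P₂¹: the zero-curvature equation
∂ₓA − ∂_μB + AB − BA = 0 holds identically in μ iff f' = −f² + g − (1/2)x and
g' = 2fg + a. -/

noncomputable section

variable (R : Type*) [Ring R] [Algebra ℂ R]

/-- The μ-dependent matrix `A(μ)` of the Harnad–Tracy–Widom pair HTW₂¹. -/
def HTW21Amat (f g a x : R) (μ : ℂ) : Matrix (Fin 2) (Fin 2) R :=
  μ • !![(0 : R), 2; 0, 0]
    + !![-2 * f, 2 * f ^ 2 - g + x; -2, 2 * f]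
    + μ⁻¹ • !![(0 : R), 0; -g, -(f * g - g * f) - a]

/-- The μ-dependent matrix `B(μ)` of the Harnad–Tracy–Widom pair HTW₂¹. -/
def HTW21Bmat (f : R) (μ : ℂ) : Matrix (Fin 2) (Fin 2) R :=
  μ • !![(0 : R), 1; 0, 0] + !![-f, 0; -1, f]

variable {R} in
/-- Expansion of the zero-curvature expression into coefficients of powers of μ. -/
lemma HTW_expand (f g a x : R) (μ : ℂ) (hμ : μ ≠ 0) (D : R →ₗ[ℂ] R) :
    (HTW21Amat R f g a x μ).map ⇑D - !![(0 : R), 1; 0, 0]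
      + HTW21Amat R f g a x μ * HTW21Bmat R f μ
      - HTW21Bmat R f μ * HTW21Amat R f g a x μ
    = (μ^2) • (!![(0 : R), 2; 0, 0] * !![(0 : R), 1; 0, 0]
              - !![(0 : R), 1; 0, 0] * !![(0 : R), 2; 0, 0])
      + μ • ((!![(0 : R), 2; 0, 0]).map ⇑D
              + !![(0 : R), 2; 0, 0] * !![-f, 0; -1, f]
              + !![-2 * f, 2 * f ^ 2 - g + x; -2, 2 * f] * !![(0 : R), 1; 0, 0]
              - !![-f, 0; -1, f] * !![(0 : R), 2; 0, 0]
              - !![(0 : R), 1; 0, 0] * !![-2 * f, 2 * f ^ 2 - g + x; -2, 2 * f])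
      + ((!![-2 * f, 2 * f ^ 2 - g + x; -2, 2 * f]).map ⇑D - !![(0 : R), 1; 0, 0]
          + !![-2 * f, 2 * f ^ 2 - g + x; -2, 2 * f] * !![-f, 0; -1, f]
          + !![(0 : R), 0; -g, -(f * g - g * f) - a] * !![(0 : R), 1; 0, 0]
          - !![-f, 0; -1, f] * !![-2 * f, 2 * f ^ 2 - g + x; -2, 2 * f]
          - !![(0 : R), 1; 0, 0] * !![(0 : R), 0; -g, -(f * g - g * f) - a])
      + μ⁻¹ • ((!![(0 : R), 0; -g, -(f * g - g * f) - a]).map ⇑D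
          + !![(0 : R), 0; -g, -(f * g - g * f) - a] * !![-f, 0; -1, f]
          - !![-f, 0; -1, f] * !![(0 : R), 0; -g, -(f * g - g * f) - a]) := by
  have hmap : (HTW21Amat R f g a x μ).map ⇑D
      = μ • ((!![(0 : R), 2; 0, 0]).map ⇑D)
        + (!![-2 * f, 2 * f ^ 2 - g + x; -2, 2 * f]).map ⇑D
        + μ⁻¹ • ((!![(0 : R), 0; -g, -(f * g - g * f) - a]).map ⇑D) := by
    ext i j
    fin_cases i <;> fin_cases j <;>
      simp [HTW21Amat, Matrix.map_apply, map_add, map_smul]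
  rw [hmap]
  unfold HTW21Amat HTW21Bmat
  simp only [add_mul, mul_add, sub_mul, mul_sub, Matrix.smul_mul, Matrix.mul_smul, smul_smul,
    inv_mul_cancel₀ hμ, mul_inv_cancel₀ hμ, one_smul]
  module

variable {R} in
/-- The μ² coefficient vanishes. -/
lemma HTW_C2 : !![(0 : R), 2; 0, 0] * !![(0 : R), 1; 0, 0]
    - !![(0 : R), 1; 0, 0] * !![(0 : R), 2; 0, 0] = 0 := by
  simp [Matrix.mul_fin_two]

variable {R} in
/-- The μ¹ coefficient vanishes. -/
lemma HTW_C1 (D : R →ₗ[ℂ] R) (f g x : R) (hD2 : D (2 : R) = 0) :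
    (!![(0 : R), 2; 0, 0]).map ⇑D
      + !![(0 : R), 2; 0, 0] * !![-f, 0; -1, f]
      + !![-2 * f, 2 * f ^ 2 - g + x; -2, 2 * f] * !![(0 : R), 1; 0, 0]
      - !![-f, 0; -1, f] * !![(0 : R), 2; 0, 0]
      - !![(0 : R), 1; 0, 0] * !![-2 * f, 2 * f ^ 2 - g + x; -2, 2 * f] = 0 := by
  ext i j
  fin_cases i <;> fin_cases j <;>
    simp [Matrix.mul_fin_two, Matrix.map_apply, hD2] <;> noncomm_ring

variable {R} in
/-- The μ⁰ coefficient vanishes, given the system P₂¹. -/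
lemma HTW_C0 (D : R →ₗ[ℂ] R) (hD : ∀ a b : R, D (a * b) = D a * b + a * D b)
    (f g a x y : R) (hD2 : D (2 : R) = 0) (hx1 : D x = 1) (ha : D a = 0)
    (hyx : y + y = x)
    (hf : D f = -f ^ 2 + g - y) (hg : D g = 2 * f * g + a) :
    (!![-2 * f, 2 * f ^ 2 - g + x; -2, 2 * f]).map ⇑D - !![(0 : R), 1; 0, 0]
      + !![-2 * f, 2 * f ^ 2 - g + x; -2, 2 * f] * !![-f, 0; -1, f]
      + !![(0 : R), 0; -g, -(f * g - g * f) - a] * !![(0 : R), 1; 0, 0]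
      - !![-f, 0; -1, f] * !![-2 * f, 2 * f ^ 2 - g + x; -2, 2 * f]
      - !![(0 : R), 1; 0, 0] * !![(0 : R), 0; -g, -(f * g - g * f) - a] = 0 := by
  ext i j
  fin_cases i <;> fin_cases j <;>
    simp [Matrix.mul_fin_two, Matrix.map_apply, map_sub, map_add, map_neg, hD, hD2, hx1, ha,
      hf, hg, pow_two] <;>
  (try rw [← hyx]) <;> noncomm_ring

variable {R} in
/-- The μ⁻¹ coefficient vanishes, given the system P₂¹. -/
lemma HTW_Cm1 (D : R →ₗ[ℂ] R) (hD : ∀ a b : R, D (a * b) = D a * b + a * D b)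
    (f g a y : R) (ha : D a = 0) (hyg : y * g = g * y)
    (hf : D f = -f ^ 2 + g - y) (hg : D g = 2 * f * g + a) :
    (!![(0 : R), 0; -g, -(f * g - g * f) - a]).map ⇑D
      + !![(0 : R), 0; -g, -(f * g - g * f) - a] * !![-f, 0; -1, f]
      - !![-f, 0; -1, f] * !![(0 : R), 0; -g, -(f * g - g * f) - a] = 0 := by
  ext i j
  fin_cases i <;> fin_cases j
  · simp [Matrix.mul_fin_two, Matrix.map_apply]
  · simp [Matrix.mul_fin_two, Matrix.map_apply]
  · simp [Matrix.mul_fin_two, Matrix.map_apply, map_sub, map_add, map_neg, hD, ha, hf, hg,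
      pow_two]
    noncomm_ring
  · simp [Matrix.mul_fin_two, Matrix.map_apply, map_sub, map_add, map_neg, hD, ha, hf, hg,
      pow_two]
    have key : ∀ E : R, E = y * g - g * y → E = 0 := fun E h => by
      rw [h, hyg, sub_self]
    have key2 : ∀ E : R, E = g * y - y * g → E = 0 := fun E h => by
      rw [h, hyg, sub_self]
    first
      | exact key _ (by noncomm_ring)
      | exact key2 _ (by noncomm_ring)
      | noncomm_ring

variable {R} in
lemma HTW_half (u v : R) (h : u + u = v + v) : u = v := by
  have h2 := congrArg (fun r => (1/2 : ℂ) • r) h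
  simpa [smul_add, ← two_smul ℂ u, ← two_smul ℂ v, smul_smul] using h2

theorem HTW21_zero_curvature_iff_P21
    (D : R →ₗ[ℂ] R) (hD : ∀ a b : R, D (a * b) = D a * b + a * D b)
    (x : R) (hx : ∀ r : R, x * r = r * x) (hx1 : D x = 1)
    (f g a : R) (ha : D a = 0) :
    (∀ μ : ℂ, μ ≠ 0 →
        (HTW21Amat R f g a x μ).map ⇑D - !![(0 : R), 1; 0, 0]
          + HTW21Amat R f g a x μ * HTW21Bmat R f μ
          - HTW21Bmat R f μ * HTW21Amat R f g a x μ = 0)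
      ↔ (D f = -f ^ 2 + g - (1 / 2 : ℂ) • x ∧
          D g = 2 * f * g + a) := by
  have hD1 : D (1 : R) = 0 := by
    have := hD 1 1
    simpa using this
  have hD2 : D (2 : R) = 0 := by
    rw [show (2 : R) = 1 + 1 by norm_num, map_add, hD1, add_zero]
  obtain ⟨y, hyx, hy2, hyg⟩ :
      ∃ y : R, y + y = x ∧ (1 / 2 : ℂ) • x = y ∧ y * g = g * y := by
    refine ⟨(1 / 2 : ℂ) • x, ?_, rfl, ?_⟩
    · rw [← two_smul ℂ, smul_smul]
      norm_num
    · rw [smul_mul_assoc, hx, mul_smul_comm]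
  rw [hy2]
  constructor
  · intro H
    have h := H 1 one_ne_zero
    rw [HTW_expand f g a x 1 one_ne_zero D] at h
    simp only [one_pow, one_smul, inv_one] at h
    rw [HTW_C2, HTW_C1 D f g x hD2, zero_add, zero_add] at h
    have h' := Matrix.ext_iff.2 h
    have h00 := h' 0 0
    have h10 := h' 1 0
    simp [Matrix.mul_fin_two, Matrix.map_apply, map_sub, map_add, map_neg, hD, hD2, hx1, ha,
      pow_two] at h00 h10
    rw [← hyx] at h00
    constructor
    · apply HTW_half
      show D f + D f = (-f ^ 2 + g - y) + (-f ^ 2 + g - y)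
      linear_combination (norm := noncomm_ring) -h00
    · linear_combination (norm := noncomm_ring) -h10
  · rintro ⟨hf, hg⟩ μ hμ
    rw [HTW_expand f g a x μ hμ D, HTW_C2, HTW_C1 D f g x hD2,
      HTW_C0 D hD f g a x y hD2 hx1 ha hyx hf hg,
      HTW_Cm1 D hD f g a y ha hyg hf hg]
    simp
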